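/- Let A_K be an n×n real matrix, K an m×n real matrix, W ⊆ ℝⁿ, and Φ ⊆ ℝⁿ an RPI set, i.e. A_K Φ ⊕ W ⊆ Φ. Let X ⊆ ℝⁿ and U ⊆ ℝᵐ be constraint sets and define the tightened constraints X₁ := X ⊖ Φ and U₁ := U ⊖ KΦ. Let x, x̄ : ℕ → ℝⁿ and ū : ℕ → ℝᵐ be such that e(k) := x(k) − x̄(k) satisfies e(k+1) = A_K e(k) + w(k) with w(k) ∈ W, and define the control u(k) := ū(k) + K e(k). If e(0) ∈ Φ, x̄(k) ∈ X₁, and ū(k) ∈ U₁ for all k ∈ ℕ, then x(k) ∈ X and u(k) ∈ U for all k ∈ ℕ. -/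
import Mathlib


open Pointwise

/-- The Pontryagin set difference `A ⊖ B = {x : x + b ∈ A for all b ∈ B}`. -/
def pontryaginDiff {V : Type*} [Add V] (A B : Set V) : Set V :=
  {x | ∀ b ∈ B, x + b ∈ A}

/-- With `Φ` RPI for the error dynamics, tightened constraints
`X₁ = X ⊖ Φ` and `U₁ = U ⊖ KΦ`, error `e(k) = x(k) − x̄(k)` obeying
`e(k+1) = A_K e(k) + w(k)`, `w(k) ∈ W`, control `u(k) = ū(k) + K e(k)`,
`e 0 ∈ Φ`, `x̄(k) ∈ X₁` and `ū(k) ∈ U₁` for all `k`, we conclude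
`x(k) ∈ X` and `u(k) ∈ U` for all `k`. -/
theorem tightened_constraints_robust_satisfaction
    (n m : ℕ) (AK : Matrix (Fin n) (Fin n) ℝ) (K : Matrix (Fin m) (Fin n) ℝ)
    (W Φ : Set (EuclideanSpace ℝ (Fin n)))
    (X : Set (EuclideanSpace ℝ (Fin n))) (U : Set (EuclideanSpace ℝ (Fin m)))
    (hRPI : (Matrix.toEuclideanLin AK) '' Φ + W ⊆ Φ)
    (x xbar : ℕ → EuclideanSpace ℝ (Fin n)) (ubar : ℕ → EuclideanSpace ℝ (Fin m))
    (w : ℕ → EuclideanSpace ℝ (Fin n))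
    (hdyn : ∀ k : ℕ,
      x (k + 1) - xbar (k + 1) = Matrix.toEuclideanLin AK (x k - xbar k) + w k)
    (hw : ∀ k : ℕ, w k ∈ W)
    (h0 : x 0 - xbar 0 ∈ Φ)
    (hxbar : ∀ k : ℕ, xbar k ∈ pontryaginDiff X Φ)
    (hubar : ∀ k : ℕ, ubar k ∈ pontryaginDiff U ((Matrix.toEuclideanLin K) '' Φ)) :
    ∀ k : ℕ, x k ∈ X ∧
      ubar k + Matrix.toEuclideanLin K (x k - xbar k) ∈ U := by
  have he : ∀ k, x k - xbar k ∈ Φ := by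
    intro k
    induction k with
    | zero => exact h0
    | succ k ih =>
      rw [hdyn k]
      exact hRPI (Set.add_mem_add (Set.mem_image_of_mem _ ih) (hw k))
  intro k
  constructor
  · have := hxbar k (x k - xbar k) (he k)
    simpa using this
  · exact hubar k _ (Set.mem_image_of_mem _ (he k))
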